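/- A Markov transition semigroup {P_t}_{t≥0} on a Hilbert space E is strong Feller provided that for every function φ: E → ℝ with ‖φ‖_∞ := sup_{x∈E}|φ(x)| and ‖∇φ‖_∞ finite, one has ‖∇P_tφ(x)‖ ≤ C(‖x‖)‖φ‖_∞ for all x ∈ E, where C: ℝ⁺ → ℝ is a fixed nondecreasing function. -/

import Mathlib

/-!
The gradient bound and the mean value theorem make `x ↦ ∫ u d(P t x)` Lipschitz on balls,
uniformly over differentiable `u` with `0 ≤ u ≤ 1` and bounded gradient. In a Hilbert space
such functions separate any set `F` from the complement of its `ε`-thickening: compose a smooth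
step with the Lasry–Lions sup-convolution `x ↦ sup_z (d(z, F)² - 2‖z - x‖²)`, which is `C¹` and
lies between `d(x, F)²` and `2 d(x, F)²`. Since finite Borel measures on a metric space are
inner regular by closed sets, `x ↦ P t x` is then locally Lipschitz in total variation, and the
layer-cake formula carries this over to every bounded Borel `φ`.
-/

open MeasureTheory ProbabilityTheory Filter
open scoped ENNReal

/-- The sup-norm `‖φ‖_∞ = sup_x |φ x|` of a function `φ : E → ℝ`. -/
noncomputable def supNorm {E : Type*} (φ : E → ℝ) : ℝ := ⨆ x, |φ x|

open Metric Topology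
open scoped RealInnerProductSpace

theorem supNorm_nonneg {E : Type*} (φ : E → ℝ) : 0 ≤ supNorm φ :=
  Real.iSup_nonneg fun x => abs_nonneg (φ x)

section Minimizer

variable {E : Type*} [NormedAddCommGroup E] [NormedSpace ℝ E] [CompleteSpace E]

theorem exists_forall_add_norm_sub_sq_le {f : E → ℝ} (hf : LowerSemicontinuous f)
    (hbdd : BddBelow (Set.range f))
    (hmid : ∀ a b, f ((2 : ℝ)⁻¹ • (a + b)) ≤ (f a + f b) / 2 - ‖a - b‖ ^ 2 / 4) :
    ∃ m, ∀ z, f m + ‖z - m‖ ^ 2 / 2 ≤ f z := by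
  set I := ⨅ z, f z
  have hI : ∀ z, I ≤ f z := ciInf_le hbdd
  have hsep : ∀ a b, ‖a - b‖ ^ 2 ≤ 2 * (f a - I) + 2 * (f b - I) := fun a b => by
    linarith [hmid a b, hI ((2 : ℝ)⁻¹ • (a + b))]
  have hseq : ∀ n : ℕ, ∃ z, f z < I + 1 / (n + 1) := fun n =>
    exists_lt_of_ciInf_lt (lt_add_of_pos_right I Nat.one_div_pos_of_nat)
  choose z hz using hseq
  have hcauchy : CauchySeq z := by
    refine cauchySeq_of_le_tendsto_0 (fun N : ℕ => √(4 * (1 / (N + 1))))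
      (fun n m N hn hm => ?_) ?_
    · have hanti : ∀ k : ℕ, N ≤ k → 1 / ((k : ℝ) + 1) ≤ 1 / (N + 1) := fun k hk =>
        Nat.one_div_le_one_div hk
      rw [dist_eq_norm]
      refine Real.le_sqrt_of_sq_le ?_
      linarith [hsep (z n) (z m), hz n, hz m, hanti n hn, hanti m hm]
    · simpa using ((tendsto_one_div_add_atTop_nhds_zero_nat (𝕜 := ℝ)).const_mul 4).sqrt
  obtain ⟨m, hm⟩ := cauchySeq_tendsto_of_complete hcauchy
  have hfm : f m ≤ I := by
    refine le_of_forall_gt_imp_ge_of_dense fun a ha => ?_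
    have hlim : Tendsto (fun n : ℕ => I + 1 / ((n : ℝ) + 1)) atTop (𝓝 I) := by
      simpa using (tendsto_one_div_add_atTop_nhds_zero_nat (𝕜 := ℝ)).const_add I
    exact (hf.isClosed_preimage a).mem_of_tendsto hm
      ((hlim.eventually (gt_mem_nhds ha)).mono fun n hn => ((hz n).trans hn).le)
  refine ⟨m, fun w => ?_⟩
  linarith [hsep w m, hI m]

end Minimizer

section Calculus

variable {E G : Type*} [NormedAddCommGroup E] [NormedSpace ℝ E] [NormedAddCommGroup G]
  [NormedSpace ℝ G]

theorem hasFDerivAt_of_norm_sub_sub_le_sq {f : E → G} {f' : E →L[ℝ] G} {x : E} {c : ℝ}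
    (h : ∀ y, ‖f y - f x - f' (y - x)‖ ≤ c * ‖y - x‖ ^ 2) : HasFDerivAt f f' x := by
  rw [hasFDerivAt_iff_isLittleO_nhds_zero]
  refine (Asymptotics.IsBigO.of_bound c (Eventually.of_forall fun v => ?_)).trans_isLittleO
    (Asymptotics.isLittleO_norm_pow_id one_lt_two)
  simpa [Real.norm_eq_abs] using h (x + v)

theorem norm_sub_le_of_norm_fderiv_le {f : E → G} (hf : Differentiable ℝ f) {B : ℝ → ℝ}
    (hB : Monotone B) (h : ∀ z, ‖fderiv ℝ f z‖ ≤ B ‖z‖) (x y : E) :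
    ‖f x - f y‖ ≤ B (max ‖x‖ ‖y‖) * ‖x - y‖ :=
  (convex_closedBall (0 : E) (max ‖x‖ ‖y‖)).norm_image_sub_le_of_norm_fderiv_le
    (fun z _ => hf z) (fun z hz => (h z).trans (hB (mem_closedBall_zero_iff.1 hz)))
    (mem_closedBall_zero_iff.2 (le_max_right _ _)) (mem_closedBall_zero_iff.2 (le_max_left _ _))

end Calculus

section Lipschitz

variable {E G : Type*} [SeminormedAddCommGroup E] [SeminormedAddCommGroup G]

theorem continuous_of_norm_sub_le {f : E → G} {L : ℝ → ℝ} (hL : Monotone L)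
    (h : ∀ x y, ‖f x - f y‖ ≤ L (max ‖x‖ ‖y‖) * ‖x - y‖) : Continuous f := by
  refine continuous_iff_continuousAt.2 fun x => ?_
  refine continuousAt_of_locally_lipschitz one_pos (max (L (‖x‖ + 1)) 0) fun y hy => ?_
  rw [dist_eq_norm, dist_eq_norm] at *
  have hmax : max ‖y‖ ‖x‖ ≤ ‖x‖ + 1 :=
    max_le (by linarith [norm_le_insert' y x]) (by linarith)
  calc ‖f y - f x‖ ≤ L (max ‖y‖ ‖x‖) * ‖y - x‖ := h y x
    _ ≤ max (L (‖x‖ + 1)) 0 * ‖y - x‖ := by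
      gcongr
      exact (hL hmax).trans (le_max_left _ _)

end Lipschitz

theorem abs_le_one_of_indicator_le_of_le_indicator {X : Type*} {u : X → ℝ} {S T : Set X}
    (hSu : S.indicator 1 ≤ u) (huT : u ≤ T.indicator 1) (x : X) : |u x| ≤ 1 := by
  have h0 : 0 ≤ S.indicator (1 : X → ℝ) x := Set.indicator_nonneg (fun _ _ => zero_le_one) x
  have h1 : T.indicator (1 : X → ℝ) x ≤ 1 := Set.indicator_le_self' (fun _ _ => zero_le_one) x
  exact abs_le.2 ⟨by linarith [hSu x], (huT x).trans h1⟩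

section TotalVariation

variable {X : Type*} [MeasurableSpace X] {μ ν : Measure X}

theorem integral_eq_integral_Ioc_measureReal_le_add [IsProbabilityMeasure μ] {φ : X → ℝ}
    (hφ : Measurable φ) {M : ℝ} (hM : ∀ x, |φ x| ≤ M) :
    ∫ x, φ x ∂μ = (∫ t in Set.Ioc 0 (2 * M), μ.real {x | t ≤ φ x + M}) - M := by
  have hint : Integrable φ μ :=
    (integrable_const M).mono' hφ.aestronglyMeasurable (ae_of_all _ hM)
  have hlayer := (hint.add (integrable_const M)).integral_eq_integral_Ioc_meas_le
    (f := fun x => φ x + M) (M := 2 * M)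
    (ae_of_all _ fun x => show 0 ≤ φ x + M by linarith [neg_abs_le (φ x), hM x])
    (ae_of_all _ fun x => show φ x + M ≤ 2 * M by linarith [le_abs_self (φ x), hM x])
  rw [eq_sub_iff_add_eq, ← hlayer, integral_add hint (integrable_const M)]
  simp

theorem abs_integral_sub_le_of_abs_measureReal_sub_le [IsProbabilityMeasure μ]
    [IsProbabilityMeasure ν] {K : ℝ}
    (hK : ∀ A, MeasurableSet A → |μ.real A - ν.real A| ≤ K) {φ : X → ℝ} (hφ : Measurable φ)
    {M : ℝ} (hM : ∀ x, |φ x| ≤ M) :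
    |∫ x, φ x ∂μ - ∫ x, φ x ∂ν| ≤ 2 * M * K := by
  have hlevel : ∀ t, MeasurableSet {x | t ≤ φ x + M} := fun t =>
    measurableSet_le measurable_const (hφ.add_const M)
  have hint : ∀ (m : Measure X) [IsFiniteMeasure m],
      IntegrableOn (fun t => m.real {x | t ≤ φ x + M}) (Set.Ioc 0 (2 * M)) := by
    intro m _
    refine (AntitoneOn.integrableOn_isCompact (isCompact_Icc (a := 0) (b := 2 * M)) ?_).mono_set
      Set.Ioc_subset_Icc_self
    exact fun s _ t _ hst => measureReal_mono fun x hx => le_trans hst hx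
  have : Nonempty X := nonempty_of_isProbabilityMeasure μ
  have hM0 : 0 ≤ M := (abs_nonneg _).trans (hM (Classical.arbitrary X))
  rw [integral_eq_integral_Ioc_measureReal_le_add hφ hM,
    integral_eq_integral_Ioc_measureReal_le_add hφ hM, sub_sub_sub_cancel_right,
    ← integral_sub (hint μ) (hint ν), ← Real.norm_eq_abs]
  calc _ ≤ K * volume.real (Set.Ioc (0 : ℝ) (2 * M)) :=
        norm_setIntegral_le_of_norm_le_const measure_Ioc_lt_top fun t _ => hK _ (hlevel t)
    _ = 2 * M * K := by
        rw [Real.volume_real_Ioc_of_le (by linarith)]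
        ring

theorem measureReal_le_add_of_measure_sdiff_le [IsFiniteMeasure μ] {S T : Set X} {c : ℝ}
    (hc : 0 ≤ c) (h : μ (S \ T) ≤ ENNReal.ofReal c) : μ.real S ≤ μ.real T + c := by
  have hST := ENNReal.toReal_le_of_le_ofReal hc h
  rw [← measureReal_def] at hST
  linarith [le_measureReal_sdiff (μ := μ) (s₁ := S) (s₂ := T)]

theorem measureReal_le_integral_and_integral_le_measureReal [IsFiniteMeasure μ] {u : X → ℝ}
    (hu : Measurable u) {S T : Set X} (hS : MeasurableSet S) (hT : MeasurableSet T)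
    (hSu : S.indicator 1 ≤ u) (huT : u ≤ T.indicator 1) :
    μ.real S ≤ ∫ x, u x ∂μ ∧ ∫ x, u x ∂μ ≤ μ.real T := by
  have hint : Integrable u μ := (integrable_const 1).mono' hu.aestronglyMeasurable
    (ae_of_all _ (abs_le_one_of_indicator_le_of_le_indicator hSu huT))
  rw [← integral_indicator_one hS, ← integral_indicator_one hT]
  exact ⟨integral_mono ((integrable_const 1).indicator hS) hint hSu,
    integral_mono hint ((integrable_const 1).indicator hT) huT⟩

variable [PseudoMetricSpace X] [BorelSpace X] [IsFiniteMeasure μ] [IsFiniteMeasure ν]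

theorem measureReal_sub_le_of_forall_integral_sub_le {K : ℝ}
    (h : ∀ F : Set X, IsClosed F → ∀ ε > 0, ∃ u : X → ℝ, Measurable u ∧
      F.indicator 1 ≤ u ∧ u ≤ (thickening ε F).indicator 1 ∧ ∫ x, u x ∂μ - ∫ x, u x ∂ν ≤ K)
    {A : Set X} (hA : MeasurableSet A) : μ.real A - ν.real A ≤ K := by
  refine le_of_forall_pos_le_add fun δ hδ => ?_
  set ρ := μ + ν
  have hδ' : ENNReal.ofReal (δ / 2) ≠ 0 := by simpa using hδ
  obtain ⟨F, hFA, hFc, hAF⟩ := hA.exists_isClosed_sdiff_lt (measure_ne_top ρ A) hδ'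
  have hthick : ∀ᶠ r in 𝓝[>] 0, ρ (thickening r F) < ρ F + ENNReal.ofReal (δ / 2) :=
    (tendsto_measure_thickening_of_isClosed ⟨1, one_pos, measure_ne_top ρ _⟩ hFc).eventually
      (gt_mem_nhds (ENNReal.lt_add_right (measure_ne_top ρ F) hδ'))
  obtain ⟨ε, hεF, hε⟩ := (hthick.and self_mem_nhdsWithin).exists
  obtain ⟨u, hum, huF, huN, hK⟩ := h F hFc ε hε
  have hFN : ρ (thickening ε F \ F) < ENNReal.ofReal (δ / 2) :=
    measure_sdiff_lt_of_lt_add hFc.measurableSet.nullMeasurableSet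
      (self_subset_thickening hε F) (measure_ne_top ρ F) hεF
  have hμA : μ.real A ≤ μ.real F + δ / 2 :=
    measureReal_le_add_of_measure_sdiff_le (by positivity)
      ((Measure.le_add_right le_rfl _).trans hAF.le)
  have hνN : ν.real (thickening ε F) ≤ ν.real F + δ / 2 :=
    measureReal_le_add_of_measure_sdiff_le (by positivity)
      ((Measure.le_add_left le_rfl _).trans hFN.le)
  have hμu := measureReal_le_integral_and_integral_le_measureReal (μ := μ) hum
    hFc.measurableSet isOpen_thickening.measurableSet huF huN
  have hνu := measureReal_le_integral_and_integral_le_measureReal (μ := ν) hum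
    hFc.measurableSet isOpen_thickening.measurableSet huF huN
  linarith [measureReal_mono (μ := ν) hFA]

theorem abs_measureReal_sub_le_of_forall_abs_integral_sub_le {K : ℝ}
    (h : ∀ F : Set X, IsClosed F → ∀ ε > 0, ∃ u : X → ℝ, Measurable u ∧
      F.indicator 1 ≤ u ∧ u ≤ (thickening ε F).indicator 1 ∧ |∫ x, u x ∂μ - ∫ x, u x ∂ν| ≤ K)
    {A : Set X} (hA : MeasurableSet A) : |μ.real A - ν.real A| ≤ K := by
  refine abs_sub_le_iff.2
    ⟨measureReal_sub_le_of_forall_integral_sub_le (fun F hF ε hε => ?_) hA,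
      measureReal_sub_le_of_forall_integral_sub_le (fun F hF ε hε => ?_) hA⟩ <;>
  obtain ⟨u, hum, huF, huN, hK⟩ := h F hF ε hε
  · exact ⟨u, hum, huF, huN, (le_abs_self _).trans hK⟩
  · exact ⟨u, hum, huF, huN, (le_abs_self _).trans ((abs_sub_comm _ _).trans_le hK)⟩

end TotalVariation

section SupConvolution

variable {E : Type*} [NormedAddCommGroup E] [InnerProductSpace ℝ E]

theorem norm_inv_two_smul_add_sq (a b : E) :
    ‖(2 : ℝ)⁻¹ • (a + b)‖ ^ 2 = (‖a‖ ^ 2 + ‖b‖ ^ 2) / 2 - ‖a - b‖ ^ 2 / 4 := by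
  rw [norm_smul, mul_pow, Real.norm_of_nonneg (by norm_num)]
  linarith [parallelogram_law_with_norm ℝ a b]

theorem infDist_sq_sub_norm_sq_midpoint (F : Set E) (a b : E) :
    (infDist a F ^ 2 - ‖a‖ ^ 2 + (infDist b F ^ 2 - ‖b‖ ^ 2)) / 2 ≤
      infDist ((2 : ℝ)⁻¹ • (a + b)) F ^ 2 - ‖(2 : ℝ)⁻¹ • (a + b)‖ ^ 2 := by
  have hmid := norm_inv_two_smul_add_sq a b
  have hm : ∀ y, ⟪(2 : ℝ)⁻¹ • (a + b), y⟫ = (⟪a, y⟫ + ⟪b, y⟫) / 2 := fun y => by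
    rw [real_inner_smul_left, inner_add_left]; ring
  set m := (2 : ℝ)⁻¹ • (a + b)
  rcases F.eq_empty_or_nonempty with rfl | hF
  · simp only [infDist_empty]
    linarith [sq_nonneg ‖a - b‖]
  -- `‖m - y‖² - ‖m‖²` is affine in `m`, so `infDist m F ^ 2 - ‖m‖ ^ 2` is concave
  have hdist : ∀ z, ∀ y ∈ F, infDist z F ^ 2 ≤ ‖z - y‖ ^ 2 := fun z y hy => by
    rw [← dist_eq_norm]
    exact pow_le_pow_left₀ infDist_nonneg (infDist_le_dist_of_mem hy) 2
  set c := (infDist a F ^ 2 - ‖a‖ ^ 2 + (infDist b F ^ 2 - ‖b‖ ^ 2)) / 2 + ‖m‖ ^ 2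
    with hc_def
  have hc : √c ≤ infDist m F := (le_infDist hF).2 fun y hy => by
    refine Real.sqrt_le_iff.2 ⟨dist_nonneg, ?_⟩
    rw [dist_eq_norm]
    linarith [hdist a y hy, hdist b y hy, norm_sub_sq_real m y, norm_sub_sq_real a y,
      norm_sub_sq_real b y, hm y]
  linarith [(Real.sqrt_le_iff.1 hc).2]

variable [CompleteSpace E] (F : Set E)

theorem exists_forall_le_sq_infDist_sub (x : E) :
    ∃ m, ∀ z, infDist z F ^ 2 - 2 * ‖z - x‖ ^ 2 + ‖z - m‖ ^ 2 / 2 ≤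
      infDist m F ^ 2 - 2 * ‖m - x‖ ^ 2 := by
  have hmid : ∀ a b : E,
      2 * ‖(2 : ℝ)⁻¹ • (a + b) - x‖ ^ 2 - infDist ((2 : ℝ)⁻¹ • (a + b)) F ^ 2 ≤
        (2 * ‖a - x‖ ^ 2 - infDist a F ^ 2 + (2 * ‖b - x‖ ^ 2 - infDist b F ^ 2)) / 2
          - ‖a - b‖ ^ 2 / 4 := fun a b => by
    have hmx : ⟪(2 : ℝ)⁻¹ • (a + b), x⟫ = (⟪a, x⟫ + ⟪b, x⟫) / 2 := by
      rw [real_inner_smul_left, inner_add_left]; ring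
    linarith [infDist_sq_sub_norm_sq_midpoint F a b, norm_inv_two_smul_add_sq a b,
      norm_sub_sq_real ((2 : ℝ)⁻¹ • (a + b)) x, norm_sub_sq_real a x, norm_sub_sq_real b x]
  have hbdd : BddBelow (Set.range fun z => 2 * ‖z - x‖ ^ 2 - infDist z F ^ 2) := by
    refine ⟨-2 * infDist x F ^ 2, ?_⟩
    rintro _ ⟨z, rfl⟩
    have := infDist_le_infDist_add_dist (x := z) (y := x) (s := F)
    rw [dist_eq_norm] at this
    nlinarith [infDist_nonneg (x := z) (s := F), sq_nonneg (infDist x F - ‖z - x‖)]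
  have hcont : Continuous fun z => 2 * ‖z - x‖ ^ 2 - infDist z F ^ 2 := by
    have := continuous_infDist_pt (α := E) F
    fun_prop
  obtain ⟨m, hm⟩ := exists_forall_add_norm_sub_sq_le hcont.lowerSemicontinuous hbdd hmid
  exact ⟨m, fun z => by linarith [hm z]⟩

noncomputable def sqInfDistSupConvPoint (x : E) : E :=
  (exists_forall_le_sq_infDist_sub F x).choose

/-- The sup-convolution `x ↦ sup_z (infDist z F ^ 2 - 2 * ‖z - x‖ ^ 2)`, a `C¹` regularisation
of `infDist · F ^ 2` (Lasry–Lions). -/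
noncomputable def sqInfDistSupConv (x : E) : ℝ :=
  infDist (sqInfDistSupConvPoint F x) F ^ 2 - 2 * ‖sqInfDistSupConvPoint F x - x‖ ^ 2

local notation "π" => sqInfDistSupConvPoint F
local notation "w" => sqInfDistSupConv F

theorem le_sqInfDistSupConv (x z : E) :
    infDist z F ^ 2 - 2 * ‖z - x‖ ^ 2 + ‖z - π x‖ ^ 2 / 2 ≤ w x :=
  (exists_forall_le_sq_infDist_sub F x).choose_spec z

theorem sqInfDistSupConv_add_inner_le (x y : E) :
    w x + ⟪(4 : ℝ) • (π x - x), y - x⟫ - 2 * ‖y - x‖ ^ 2 + ‖π x - π y‖ ^ 2 / 2 ≤ w y := by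
  have hexp : π x - y = (π x - x) - (y - x) := by abel
  have := le_sqInfDistSupConv F y (π x)
  rw [hexp, norm_sub_sq_real] at this
  rw [real_inner_smul_left]
  unfold sqInfDistSupConv at *
  linarith

theorem norm_sqInfDistSupConvPoint_sub_le (x y : E) : ‖π x - π y‖ ≤ 4 * ‖x - y‖ := by
  have hxy := sqInfDistSupConv_add_inner_le F x y
  have hyx := sqInfDistSupConv_add_inner_le F y x
  have hinner : ⟪π x - π y, x - y⟫ ≤ ‖π x - π y‖ * ‖x - y‖ := real_inner_le_norm _ _
  have hsum : ‖π x - π y‖ ^ 2 ≤ 4 * ⟪π x - π y, x - y⟫ := by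
    simp only [real_inner_smul_left] at hxy hyx
    rw [norm_sub_rev (π y) (π x)] at hyx
    rw [norm_sub_rev y x] at hxy
    have e1 : ⟪π x - x, y - x⟫ = -⟪π x - x, x - y⟫ := by rw [← inner_neg_right, neg_sub]
    have e2 :
        ⟪π x - π y, x - y⟫ = ⟪π x - x, x - y⟫ - ⟪π y - y, x - y⟫ + ‖x - y‖ ^ 2 := by
      rw [← real_inner_self_eq_norm_sq, ← inner_sub_left, ← inner_add_left]; congr 1; abel
    linarith
  nlinarith [norm_nonneg (π x - π y), norm_nonneg (x - y)]

theorem hasFDerivAt_sqInfDistSupConv (x : E) :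
    HasFDerivAt w (innerSL ℝ ((4 : ℝ) • (π x - x))) x := by
  refine hasFDerivAt_of_norm_sub_sub_le_sq (c := 16) fun y => ?_
  have hxy := sqInfDistSupConv_add_inner_le F x y
  have hyx := sqInfDistSupConv_add_inner_le F y x
  have hlip : ⟪π y - π x, y - x⟫ ≤ 4 * ‖y - x‖ ^ 2 := by
    nlinarith [real_inner_le_norm (π y - π x) (y - x), norm_sqInfDistSupConvPoint_sub_le F y x,
      norm_nonneg (y - x)]
  have hswap :
      ⟪π y - y, x - y⟫ = -⟪π y - π x, y - x⟫ - ⟪π x - x, y - x⟫ + ‖y - x‖ ^ 2 := by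
    rw [← real_inner_self_eq_norm_sq, ← neg_sub y x]
    simp only [inner_neg_right, inner_sub_left, inner_sub_right]
    ring
  simp only [real_inner_smul_left] at hxy hyx
  rw [norm_sub_rev x y] at hyx
  rw [innerSL_apply_apply, real_inner_smul_left, Real.norm_eq_abs, abs_le]
  constructor <;> nlinarith [sq_nonneg ‖π x - π y‖, sq_nonneg ‖π y - π x‖]

theorem sq_infDist_le_sqInfDistSupConv (x : E) : infDist x F ^ 2 ≤ w x := by
  have := le_sqInfDistSupConv F x x
  rw [sub_self, norm_zero] at this
  nlinarith [sq_nonneg ‖x - π x‖]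

theorem sqInfDistSupConv_le_and_norm_sub_le (x : E) :
    w x ≤ 2 * infDist x F ^ 2 ∧ ‖π x - x‖ ≤ 2 * infDist x F := by
  have hlow := le_sqInfDistSupConv F x x
  have htri : infDist (π x) F ≤ infDist x F + ‖π x - x‖ := by
    simpa [dist_eq_norm] using infDist_le_infDist_add_dist (x := π x) (y := x) (s := F)
  have hsq := pow_le_pow_left₀ infDist_nonneg htri 2
  rw [sub_self, norm_zero, norm_sub_rev] at hlow
  unfold sqInfDistSupConv at *
  constructor
  · nlinarith [sq_nonneg (infDist x F - ‖π x - x‖)]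
  · nlinarith [infDist_nonneg (x := x) (s := F), norm_nonneg (π x - x)]

end SupConvolution

theorem deriv_smoothTransition_of_notMem_Icc {s : ℝ} (hs : s ∉ Set.Icc 0 1) :
    deriv Real.smoothTransition s = 0 := by
  rw [Set.mem_Icc, not_and_or, not_le, not_le] at hs
  rcases hs with hs | hs
  · have : Real.smoothTransition =ᶠ[𝓝 s] fun _ => 0 := by
      filter_upwards [Iio_mem_nhds hs] with r hr using Real.smoothTransition.zero_of_nonpos hr.le
    rw [this.deriv_eq, deriv_const]
  · have : Real.smoothTransition =ᶠ[𝓝 s] fun _ => 1 := by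
      filter_upwards [Ioi_mem_nhds hs] with r hr using Real.smoothTransition.one_of_one_le hr.le
    rw [this.deriv_eq, deriv_const]

theorem exists_abs_deriv_smoothTransition_le : ∃ K, ∀ s, |deriv Real.smoothTransition s| ≤ K :=
  (Real.smoothTransition.contDiff.continuous_deriv le_rfl).bounded_above_of_compact_support
    (HasCompactSupport.intro isCompact_Icc fun _ hs => deriv_smoothTransition_of_notMem_Icc hs)

section SmoothUrysohn

variable {E : Type*} [NormedAddCommGroup E] [InnerProductSpace ℝ E] [CompleteSpace E] (F : Set E)

noncomputable def smoothUrysohn (ε : ℝ) (x : E) : ℝ :=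
  Real.smoothTransition (2 - 2 / ε ^ 2 * sqInfDistSupConv F x)

theorem hasFDerivAt_smoothUrysohn (ε : ℝ) (x : E) :
    HasFDerivAt (smoothUrysohn F ε)
      (deriv Real.smoothTransition (2 - 2 / ε ^ 2 * sqInfDistSupConv F x) •
        -((2 / ε ^ 2) • innerSL ℝ ((4 : ℝ) • (sqInfDistSupConvPoint F x - x)))) x :=
  (Real.smoothTransition.contDiff.differentiable one_ne_zero _).hasDerivAt.comp_hasFDerivAt x
    (((hasFDerivAt_sqInfDistSupConv F x).const_mul _).const_sub 2)

theorem bddAbove_norm_fderiv_smoothUrysohn {ε : ℝ} (hε : 0 < ε) :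
    BddAbove (Set.range fun x => ‖fderiv ℝ (smoothUrysohn F ε) x‖) := by
  obtain ⟨K, hK⟩ := exists_abs_deriv_smoothTransition_le
  have hK0 : 0 ≤ K := (abs_nonneg _).trans (hK 0)
  refine ⟨32 * K / ε, ?_⟩
  rintro _ ⟨x, rfl⟩
  dsimp only
  obtain ⟨hw, hπ⟩ := sqInfDistSupConv_le_and_norm_sub_le F x
  rw [(hasFDerivAt_smoothUrysohn F ε x).fderiv, norm_smul, norm_neg, norm_smul, innerSL_apply_norm,
    norm_smul, Real.norm_eq_abs, Real.norm_of_nonneg (by positivity),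
    Real.norm_of_nonneg (by norm_num)]
  by_cases hd : infDist x F < 2 * ε
  · calc _ ≤ K * (2 / ε ^ 2 * (4 * (4 * ε))) := by gcongr; exacts [hK _, by linarith]
      _ = 32 * K / ε := by field_simp; ring
  · have hs : 2 - 2 / ε ^ 2 * sqInfDistSupConv F x ∉ Set.Icc 0 1 := by
      have hw' : 4 * ε ^ 2 ≤ sqInfDistSupConv F x := by
        nlinarith [sq_infDist_le_sqInfDistSupConv F x]
      have : 8 ≤ 2 / ε ^ 2 * sqInfDistSupConv F x := by
        rw [div_mul_eq_mul_div, le_div_iff₀ (by positivity)]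
        linarith
      exact fun h => by linarith [h.1]
    rw [deriv_smoothTransition_of_notMem_Icc hs, abs_zero, zero_mul]
    positivity

theorem indicator_le_smoothUrysohn (ε : ℝ) : F.indicator 1 ≤ smoothUrysohn F ε := by
  intro x
  by_cases hx : x ∈ F
  · have hw : sqInfDistSupConv F x ≤ 0 := by
      simpa [infDist_zero_of_mem hx] using (sqInfDistSupConv_le_and_norm_sub_le F x).1
    rw [Set.indicator_of_mem hx, Pi.one_apply]
    refine (Real.smoothTransition.one_of_one_le ?_).ge
    nlinarith [div_nonneg zero_le_two (sq_nonneg ε)]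
  · rw [Set.indicator_of_notMem hx]
    exact Real.smoothTransition.nonneg _

theorem smoothUrysohn_le_indicator_thickening (hF : F.Nonempty) {ε : ℝ} (hε : 0 < ε) :
    smoothUrysohn F ε ≤ (thickening ε F).indicator 1 := by
  intro x
  by_cases hx : x ∈ thickening ε F
  · rw [Set.indicator_of_mem hx]
    exact Real.smoothTransition.le_one _
  · rw [Set.indicator_of_notMem hx]
    rw [mem_thickening_iff_infDist_lt hF, not_lt] at hx
    have hw : ε ^ 2 ≤ sqInfDistSupConv F x :=
      (pow_le_pow_left₀ hε.le hx 2).trans (sq_infDist_le_sqInfDistSupConv F x)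
    have : 2 ≤ 2 / ε ^ 2 * sqInfDistSupConv F x := by
      rw [div_mul_eq_mul_div, le_div_iff₀ (by positivity)]
      linarith
    exact (Real.smoothTransition.zero_of_nonpos (by linarith)).le

theorem exists_differentiable_indicator_le_le_indicator_thickening {ε : ℝ} (hε : 0 < ε) :
    ∃ u : E → ℝ, Differentiable ℝ u ∧ BddAbove (Set.range fun x => ‖fderiv ℝ u x‖) ∧
      F.indicator 1 ≤ u ∧ u ≤ (thickening ε F).indicator 1 := by
  rcases F.eq_empty_or_nonempty with rfl | hF
  · exact ⟨0, differentiable_const 0, ⟨0, by simp⟩, by simp; rfl, by simp; rfl⟩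
  exact ⟨smoothUrysohn F ε, fun x => (hasFDerivAt_smoothUrysohn F ε x).differentiableAt,
    bddAbove_norm_fderiv_smoothUrysohn F hε, indicator_le_smoothUrysohn F ε,
    smoothUrysohn_le_indicator_thickening F hF hε⟩

end SmoothUrysohn

theorem abs_measureReal_sub_le_of_norm_fderiv_integral_le {E : Type*} [NormedAddCommGroup E]
    [InnerProductSpace ℝ E] [CompleteSpace E] [MeasurableSpace E] [BorelSpace E]
    (μ : E → Measure E) [∀ x, IsFiniteMeasure (μ x)] {B : ℝ → ℝ} (hB : Monotone B)
    (h : ∀ u : E → ℝ, Differentiable ℝ u → BddAbove (Set.range fun x => ‖fderiv ℝ u x‖) →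
      (∀ x, |u x| ≤ 1) → Differentiable ℝ (fun x => ∫ y, u y ∂μ x) ∧
        ∀ x, ‖fderiv ℝ (fun x => ∫ y, u y ∂μ x) x‖ ≤ B ‖x‖)
    (x y : E) (A : Set E) (hA : MeasurableSet A) :
    |(μ x).real A - (μ y).real A| ≤ B (max ‖x‖ ‖y‖) * ‖x - y‖ := by
  refine abs_measureReal_sub_le_of_forall_abs_integral_sub_le (fun F _ ε hε => ?_) hA
  obtain ⟨u, hud, hdu, huF, huN⟩ :=
    exists_differentiable_indicator_le_le_indicator_thickening F hε
  obtain ⟨hd, hB'⟩ := h u hud hdu (abs_le_one_of_indicator_le_of_le_indicator huF huN)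
  exact ⟨u, hud.continuous.measurable, huF, huN, norm_sub_le_of_norm_fderiv_le hd hB hB' x y⟩

theorem strong_feller_criterion_general
    (E : Type*) [NormedAddCommGroup E] [InnerProductSpace ℝ E] [CompleteSpace E]
    [MeasurableSpace E] [BorelSpace E]
    (P : ℝ → Kernel E E)
    (hMarkov : ∀ t : ℝ, 0 ≤ t → IsMarkovKernel (P t))
    (C : ℝ → ℝ) (hC : Monotone C)
    (hgrad : ∀ t : ℝ, 0 < t → ∀ φ : E → ℝ, Measurable φ →
      BddAbove (Set.range fun x => |φ x|) →
      Differentiable ℝ φ →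
      BddAbove (Set.range fun x => ‖fderiv ℝ φ x‖) →
      Differentiable ℝ (fun x => ∫ y, φ y ∂(P t x)) ∧
      ∀ x : E, ‖fderiv ℝ (fun x' => ∫ y, φ y ∂(P t x')) x‖ ≤
        C ‖x‖ * supNorm φ) :
    -- strong Feller: `P_t` maps bounded Borel functions into `C_b(E)`
    ∀ t : ℝ, 0 < t → ∀ φ : E → ℝ, Measurable φ →
      BddAbove (Set.range fun x => |φ x|) →
      Continuous fun x => ∫ y, φ y ∂(P t x) := by
  intro t ht φ hφm hφb
  have := hMarkov t ht.le
  have hL : Monotone fun r => max (C r) 0 := fun r s hrs => max_le_max (hC hrs) le_rfl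
  have htv := abs_measureReal_sub_le_of_norm_fderiv_integral_le (P t) hL fun u hud hdu hu => by
    obtain ⟨hPud, hPu⟩ := hgrad t ht u hud.continuous.measurable
      ⟨1, by rintro _ ⟨z, rfl⟩; exact hu z⟩ hud hdu
    refine ⟨hPud, fun x => (hPu x).trans ?_⟩
    exact (mul_le_mul_of_nonneg_right (le_max_left _ _) (supNorm_nonneg u)).trans
      (mul_le_of_le_one_right (le_max_right _ _) (ciSup_le hu))
  refine continuous_of_norm_sub_le (hL.const_mul (mul_nonneg zero_le_two (supNorm_nonneg φ)))
    fun x y => ?_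
  rw [Real.norm_eq_abs, mul_assoc]
  exact abs_integral_sub_le_of_abs_measureReal_sub_le (htv x y) hφm fun z => le_ciSup hφb z

/-- A Markov transition semigroup `{P_t}` on a Hilbert
space `E` is strong Feller (it maps bounded Borel functions to bounded
continuous functions for every `t > 0`) provided that for every `φ : E → ℝ`
with `‖φ‖_∞` and `‖∇φ‖_∞` finite one has
`‖∇(P_t φ)(x)‖ ≤ C(‖x‖) ‖φ‖_∞` for all `x ∈ E`, where `C : ℝ⁺ → ℝ` is a fixed
nondecreasing function. -/
theorem strong_feller_criterion
    (E : Type*) [NormedAddCommGroup E] [InnerProductSpace ℝ E] [CompleteSpace E]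
    [MeasurableSpace E] [BorelSpace E]
    (P : ℝ → Kernel E E)
    (hMarkov : ∀ t : ℝ, 0 ≤ t → IsMarkovKernel (P t))
    (hP0 : P 0 = Kernel.id)
    (hCK : ∀ s t : ℝ, 0 ≤ s → 0 ≤ t → P (s + t) = (P s) ∘ₖ (P t))
    (C : ℝ → ℝ) (hC : Monotone C)
    (hgrad : ∀ t : ℝ, 0 < t → ∀ φ : E → ℝ, Measurable φ →
      BddAbove (Set.range fun x => |φ x|) →
      Differentiable ℝ φ →
      BddAbove (Set.range fun x => ‖fderiv ℝ φ x‖) →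
      Differentiable ℝ (fun x => ∫ y, φ y ∂(P t x)) ∧
      ∀ x : E, ‖fderiv ℝ (fun x' => ∫ y, φ y ∂(P t x')) x‖ ≤
        C ‖x‖ * supNorm φ) :
    -- strong Feller: `P_t` maps bounded Borel functions into `C_b(E)`
    ∀ t : ℝ, 0 < t → ∀ φ : E → ℝ, Measurable φ →
      BddAbove (Set.range fun x => |φ x|) →
      Continuous fun x => ∫ y, φ y ∂(P t x) :=
  strong_feller_criterion_general E P hMarkov C hC hgrad
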